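/- arXiv:math-ph/0603061 — 2 statements merged into one kernel-verified Lean document; each statement's English description precedes it below -/
import Mathlib

section
/- Suppose λ : ℝ^ν → ℂ satisfies |λ(k)| ≤ 1 for all k and the decay bound |λ(k)| ≤ 𝔠/(1 + ‖k‖^{max(ν, ν/2+1)+δ}) for some 𝔠 < ∞ and δ > 0. Then there exists M < ∞ such that for every L ≥ 1, writing Λ* := (2π/L)ℤ^ν and V := L^ν: (i) Σ_{k∈Λ*} |λ(k)| ≤ M·V; (ii) Σ_{k∈Λ*} ε(k)|λ(k)|² ≤ M·V; and (iii) sup_{k∈ℝ^ν} ε(k)|λ(k)|² ≤ M. -/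
open MeasureTheory Real Filter Topology

noncomputable section

namespace PB

abbrev Kspace (ν : ℕ) : Type := EuclideanSpace ℝ (Fin ν)

/-- kinetic energy `ε(k) = ‖k‖²/(2m)` -/
def eps (ν : ℕ) (m : ℝ) (k : Kspace ν) : ℝ := ‖k‖ ^ 2 / (2 * m)

/-- `f(k,ρ) = ε(k) − μ + vρ` -/
def fF (ν : ℕ) (m μ v : ℝ) (k : Kspace ν) (ρ : ℝ) : ℝ := eps ν m k - μ + v * ρ

/-- `E(k,q,ρ) = (f(k,ρ)² − u²q²|λ(k)|²)^{1/2}` -/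
def eE (ν : ℕ) (m μ v u : ℝ) (lam : Kspace ν → ℂ) (k : Kspace ν) (q ρ : ℝ) : ℝ :=
  Real.sqrt (fF ν m μ v k ρ ^ 2 - u ^ 2 * q ^ 2 * ‖lam k‖ ^ 2)

/-- `σ(q,ρ) = vρ − μ − |u|q` -/
def sigma0 (μ v u q ρ : ℝ) : ℝ := v * ρ - μ - |u| * q

/-- The point `(2π/L)·z` of the dual lattice `Λ* = (2π/L)ℤ^ν`. -/
def latticePt (ν : ℕ) (L : ℝ) (z : Fin ν → ℤ) : Kspace ν :=
  (WithLp.equiv 2 (Fin ν → ℝ)).symm fun i => (2 * π / L) * (z i : ℝ)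

/-- integrand of the limiting approximating pressure -/
def p2Int (ν : ℕ) (m μ v u β : ℝ) (lam : Kspace ν → ℂ) (q ρ : ℝ) (k : Kspace ν) : ℝ :=
  -β⁻¹ * Real.log (1 - Real.exp (-β * eE ν m μ v u lam k q ρ))
    - (eE ν m μ v u lam k q ρ - fF ν m μ v k ρ) / 2

/-- `p²(q,ρ)`, the limiting approximating pressure -/
def p2 (ν : ℕ) (m μ v u β : ℝ) (lam : Kspace ν → ℂ) (q ρ : ℝ) : ℝ :=
  (∫ k : Kspace ν, ((2 * π) ^ ν)⁻¹ * p2Int ν m μ v u β lam q ρ k)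
    - u / 2 * q ^ 2 + v / 2 * ρ ^ 2

/-- `p²(q,ρ,η) = p²(q,ρ) + η²/(f(0,ρ) − uq)` -/
def p2eta (ν : ℕ) (m μ v u β : ℝ) (lam : Kspace ν → ℂ) (q ρ η : ℝ) : ℝ :=
  p2 ν m μ v u β lam q ρ + η ^ 2 / (fF ν m μ v 0 ρ - u * q)

/-- `p²_Λ(q,ρ)`, the finite-volume approximating pressure (cube of side `L`, `V = L^ν`) -/
def p2L (ν : ℕ) (m μ v u β L : ℝ) (lam : Kspace ν → ℂ) (q ρ : ℝ) : ℝ :=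
  -(β * L ^ ν)⁻¹ *
      (∑' z : Fin ν → ℤ,
        Real.log (1 - Real.exp (-β * eE ν m μ v u lam (latticePt ν L z) q ρ)))
    - (2 * L ^ ν)⁻¹ *
      (∑' z : Fin ν → ℤ,
        (eE ν m μ v u lam (latticePt ν L z) q ρ - fF ν m μ v (latticePt ν L z) ρ))
    - u / 2 * q ^ 2 + v / 2 * ρ ^ 2

/-- `p²_Λ(q,ρ,η) = p²_Λ(q,ρ) + η²/(f(0,ρ) − uq)` -/
def p2Leta (ν : ℕ) (m μ v u β L : ℝ) (lam : Kspace ν → ℂ) (q ρ η : ℝ) : ℝ :=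
  p2L ν m μ v u β L lam q ρ + η ^ 2 / (fF ν m μ v 0 ρ - u * q)

end PB

/-!
Up to constants, `‖λ k‖` and `ε(k) ‖λ k‖²` are both dominated by `(1 + ‖k‖)^(-(ν + δ))`: the two
entries of `max ν (ν/2 + 1)` are what the first and the second bound need, as `ε(k)` grows like
`‖k‖²`. Since each coordinate of `k = (2π/L) z` is at most `‖k‖`, the lattice sum of
`(1 + ‖k‖)^(-p)`, `p > ν`, is bounded by the `ν`-th power of the one-dimensional sum
`∑ₙ (1 + (2π/L)|n|)^(-p/ν)`, which is at most `1 + L/(π (p/ν - 1))` by comparison with an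
integral. This produces the factor `L^ν = V`.
-/

theorem hasDerivAt_neg_one_add_mul_rpow_div {a s x : ℝ} (ha : 0 < a) (hs : 1 < s) (hx : 0 ≤ x) :
    HasDerivAt (fun x : ℝ => -(1 + a * x) ^ (1 - s) / (a * (s - 1))) ((1 + a * x) ^ (-s)) x := by
  have hb : 0 < 1 + a * x := by positivity
  have h : HasDerivAt (fun x : ℝ => 1 + a * x) a x := by
    simpa using ((hasDerivAt_id x).const_mul a).const_add 1
  have h' : HasDerivAt (fun x : ℝ => -(1 + a * x) ^ (1 - s) / (a * (s - 1)))
      (-(a * (1 - s) * (1 + a * x) ^ (1 - s - 1)) / (a * (s - 1))) x :=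
    ((h.rpow_const (Or.inl hb.ne')).neg).div_const _
  convert h' using 1
  have : s - 1 ≠ 0 := by linarith
  rw [show 1 - s - 1 = -s by ring]
  field_simp
  ring

theorem tendsto_neg_one_add_mul_rpow_div_atTop {a s : ℝ} (ha : 0 < a) (hs : 1 < s) :
    Tendsto (fun x : ℝ => -(1 + a * x) ^ (1 - s) / (a * (s - 1))) atTop (𝓝 0) := by
  have h : Tendsto (fun x : ℝ => 1 + a * x) atTop atTop :=
    tendsto_atTop_add_const_left _ _ (tendsto_id.const_mul_atTop ha)
  have := ((tendsto_rpow_neg_atTop (y := s - 1) (by linarith)).comp h).neg.div_const (a * (s - 1))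
  simpa [neg_sub] using this

theorem integrableOn_Ioi_one_add_mul_rpow_neg {a s : ℝ} (ha : 0 < a) (hs : 1 < s) :
    IntegrableOn (fun x : ℝ => (1 + a * x) ^ (-s)) (Set.Ioi 0) :=
  integrableOn_Ioi_deriv_of_nonneg' (fun x hx => hasDerivAt_neg_one_add_mul_rpow_div ha hs hx)
    (fun x hx => by have : 0 < x := hx; positivity) (tendsto_neg_one_add_mul_rpow_div_atTop ha hs)

theorem integral_Ioi_one_add_mul_rpow_neg {a s : ℝ} (ha : 0 < a) (hs : 1 < s) :
    ∫ x in Set.Ioi 0, (1 + a * x) ^ (-s) = (a * (s - 1))⁻¹ := by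
  rw [integral_Ioi_of_hasDerivAt_of_nonneg' (fun x hx => hasDerivAt_neg_one_add_mul_rpow_div ha hs hx)
    (fun x hx => by have : 0 < x := hx; positivity) (tendsto_neg_one_add_mul_rpow_div_atTop ha hs)]
  simp [div_eq_mul_inv]

theorem antitoneOn_one_add_mul_rpow_neg {a s : ℝ} (ha : 0 ≤ a) (hs : 0 ≤ s) :
    AntitoneOn (fun x : ℝ => (1 + a * x) ^ (-s)) (Set.Ici 0) := fun x hx y _ hxy =>
  rpow_le_rpow_of_nonpos (by have : (0:ℝ) ≤ x := hx; positivity) (by gcongr) (by linarith)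

theorem one_add_mul_abs_int_rpow_neg_add_one {a s : ℝ} (n : ℕ) :
    (1 + a * |((n + 1 : ℤ) : ℝ)|) ^ (-s) = (1 + a * ((n + 1 : ℕ) : ℝ)) ^ (-s) := by
  push_cast; rw [abs_of_nonneg (by positivity)]

theorem one_add_mul_abs_int_rpow_neg_neg_add_one {a s : ℝ} (n : ℕ) :
    (1 + a * |((-(n + 1) : ℤ) : ℝ)|) ^ (-s) = (1 + a * ((n + 1 : ℕ) : ℝ)) ^ (-s) := by
  push_cast; rw [abs_neg, abs_of_nonneg (by positivity)]

theorem summable_one_add_mul_nat_add_one_rpow_neg {a s : ℝ} (ha : 0 < a) (hs : 1 < s) :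
    Summable fun n : ℕ => (1 + a * ((n + 1 : ℕ) : ℝ)) ^ (-s) :=
  (summable_nat_add_iff 1).mpr <|
    (antitoneOn_one_add_mul_rpow_neg ha.le (by linarith)).summable_of_integrableOn_Ioi_zero
      (integrableOn_Ioi_one_add_mul_rpow_neg ha hs) fun x hx => by
        have : (0:ℝ) < x := hx; positivity

theorem summable_one_add_mul_abs_int_rpow_neg {a s : ℝ} (ha : 0 < a) (hs : 1 < s) :
    Summable fun n : ℤ => (1 + a * |(n : ℝ)|) ^ (-s) := by
  have h := summable_one_add_mul_nat_add_one_rpow_neg ha hs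
  exact .of_add_one_of_neg_add_one (by simpa only [one_add_mul_abs_int_rpow_neg_add_one] using h)
    (by simpa only [one_add_mul_abs_int_rpow_neg_neg_add_one] using h)

theorem tsum_one_add_mul_abs_int_rpow_neg_le {a s : ℝ} (ha : 0 < a) (hs : 1 < s) :
    ∑' n : ℤ, (1 + a * |(n : ℝ)|) ^ (-s) ≤ 1 + 2 * (a * (s - 1))⁻¹ := by
  have h := summable_one_add_mul_nat_add_one_rpow_neg ha hs
  have hint : ∑' n : ℕ, (1 + a * ((n + 1 : ℕ) : ℝ)) ^ (-s) ≤ (a * (s - 1))⁻¹ := by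
    rw [← integral_Ioi_one_add_mul_rpow_neg ha hs]
    exact (antitoneOn_one_add_mul_rpow_neg ha.le (by linarith)).tsum_add_one_le_integral
      (integrableOn_Ioi_one_add_mul_rpow_neg ha hs) fun x hx => by
        have : (0:ℝ) < x := hx; positivity
  rw [tsum_of_add_one_of_neg_add_one
    (by simpa only [one_add_mul_abs_int_rpow_neg_add_one] using h)
    (by simpa only [one_add_mul_abs_int_rpow_neg_neg_add_one] using h)]
  simp only [one_add_mul_abs_int_rpow_neg_add_one, one_add_mul_abs_int_rpow_neg_neg_add_one,
    Int.cast_zero, abs_zero, mul_zero, add_zero, one_rpow]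
  linarith

section
variable {ι κ : Type*} [Fintype ι] {g : κ → ℝ}

theorem sum_prod_apply_le_tsum_pow (hg0 : 0 ≤ g) (hg : Summable g) (s : Finset (ι → κ)) :
    ∑ z ∈ s, ∏ i, g (z i) ≤ (∑' x, g x) ^ Fintype.card ι := by
  classical
  let t : ι → Finset κ := fun i => s.image (· i)
  calc ∑ z ∈ s, ∏ i, g (z i)
      ≤ ∑ z ∈ Fintype.piFinset t, ∏ i, g (z i) :=
        Finset.sum_le_sum_of_subset_of_nonneg
          (fun z hz => Fintype.mem_piFinset.mpr fun i => Finset.mem_image_of_mem _ hz)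
          fun z _ _ => Finset.prod_nonneg fun i _ => hg0 _
    _ = ∏ i, ∑ x ∈ t i, g x := (Finset.prod_univ_sum t fun _ => g).symm
    _ ≤ ∏ _i : ι, ∑' x, g x :=
        Finset.prod_le_prod (fun i _ => Finset.sum_nonneg fun x _ => hg0 x)
          fun i _ => hg.sum_le_tsum _ fun x _ => hg0 x
    _ = (∑' x, g x) ^ Fintype.card ι := Finset.prod_const _

theorem summable_prod_apply (hg0 : 0 ≤ g) (hg : Summable g) :
    Summable fun z : ι → κ => ∏ i, g (z i) :=
  summable_of_sum_le (fun _ => Finset.prod_nonneg fun _ _ => hg0 _)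
    (sum_prod_apply_le_tsum_pow hg0 hg)

theorem tsum_prod_apply_le_tsum_pow (hg0 : 0 ≤ g) (hg : Summable g) :
    ∑' z : ι → κ, ∏ i, g (z i) ≤ (∑' x, g x) ^ Fintype.card ι :=
  Real.tsum_le_of_sum_le (fun _ => Finset.prod_nonneg fun _ _ => hg0 _)
    (sum_prod_apply_le_tsum_pow hg0 hg)
end

theorem summable_and_tsum_le_of_le_mul {ι : Type*} {f g : ι → ℝ} {A : ℝ}
    (hf : ∀ i, 0 ≤ f i) (hfg : ∀ i, f i ≤ A * g i) (hg : Summable g) :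
    Summable f ∧ ∑' i, f i ≤ A * ∑' i, g i := by
  have hAg := hg.mul_left A
  have hf' := hAg.of_nonneg_of_le hf hfg
  exact ⟨hf', (hf'.tsum_le_tsum hfg hAg).trans_eq tsum_mul_left⟩

theorem one_add_rpow_le_two_rpow_mul {x e : ℝ} (hx : 0 ≤ x) (he : 0 ≤ e) :
    (1 + x) ^ e ≤ 2 ^ e * (1 + x ^ e) := by
  rcases le_total x 1 with h1 | h1
  · calc (1 + x) ^ e ≤ 2 ^ e := by gcongr; linarith
      _ ≤ 2 ^ e * (1 + x ^ e) := le_mul_of_one_le_right (by positivity)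
          (le_add_of_nonneg_right (by positivity))
  · calc (1 + x) ^ e ≤ (2 * x) ^ e := by gcongr; linarith
      _ = 2 ^ e * x ^ e := mul_rpow (by norm_num) hx
      _ ≤ 2 ^ e * (1 + x ^ e) := by gcongr; linarith

theorem le_two_rpow_mul_one_add_rpow_neg {x y c e : ℝ} (hx : 0 ≤ x) (he : 0 ≤ e) (hc : 0 ≤ c)
    (h : y ≤ c / (1 + x ^ e)) : y ≤ 2 ^ e * c * (1 + x) ^ (-e) := by
  calc y ≤ c / (1 + x ^ e) := h
    _ ≤ c / ((1 + x) ^ e / 2 ^ e) := by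
        gcongr; rw [div_le_iff₀' (by positivity)]; exact one_add_rpow_le_two_rpow_mul hx he
    _ = 2 ^ e * c * (1 + x) ^ (-e) := by
        rw [rpow_neg (by positivity)]; field_simp

theorem sq_mul_sq_le_of_le_mul_one_add_rpow_neg {x y A e : ℝ} (hx : 0 ≤ x) (hy : 0 ≤ y)
    (h : y ≤ A * (1 + x) ^ (-e)) : x ^ 2 * y ^ 2 ≤ A ^ 2 * (1 + x) ^ (2 - 2 * e) := by
  have hb : 0 < 1 + x := by linarith
  calc x ^ 2 * y ^ 2 ≤ (1 + x) ^ 2 * (A * (1 + x) ^ (-e)) ^ 2 := by gcongr; linarith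
    _ = A ^ 2 * (1 + x) ^ (2 - 2 * e) := by
        rw [sub_eq_add_neg, rpow_add hb, rpow_two, show -(2 * e) = -e * (2 : ℕ) by push_cast; ring,
          rpow_mul_natCast hb.le]
        ring

namespace PB

theorem latticePt_apply (ν : ℕ) (L : ℝ) (z : Fin ν → ℤ) (i : Fin ν) :
    latticePt ν L z i = 2 * π / L * z i := rfl

theorem one_add_norm_latticePt_rpow_neg_le_prod {ν : ℕ} (hν : 0 < ν) {L p : ℝ} (hL : 0 < L)
    (hp : 0 ≤ p) (z : Fin ν → ℤ) :
    (1 + ‖latticePt ν L z‖) ^ (-p) ≤ ∏ i, (1 + 2 * π / L * |(z i : ℝ)|) ^ (-(p / ν)) := by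
  have hb : 0 ≤ 1 + ‖latticePt ν L z‖ := by positivity
  have hsplit : (1 + ‖latticePt ν L z‖) ^ (-p)
      = ∏ _i : Fin ν, (1 + ‖latticePt ν L z‖) ^ (-(p / ν)) := by
    rw [Finset.prod_const, Finset.card_univ, Fintype.card_fin, ← rpow_natCast, ← rpow_mul hb]
    field_simp
  rw [hsplit]
  refine Finset.prod_le_prod (fun i _ => by positivity) fun i _ => ?_
  refine rpow_le_rpow_of_nonpos (by positivity) ?_ (neg_nonpos.mpr (by positivity))
  have := PiLp.norm_apply_le (latticePt ν L z) i
  rw [latticePt_apply, Real.norm_eq_abs, abs_mul, abs_of_pos (by positivity)] at this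
  linarith

theorem summable_one_add_norm_latticePt_rpow_neg {ν : ℕ} (hν : 0 < ν) {L p : ℝ} (hL : 0 < L)
    (hp : ν < p) : Summable fun z : Fin ν → ℤ => (1 + ‖latticePt ν L z‖) ^ (-p) := by
  have hs : 1 < p / ν := (one_lt_div (by positivity)).mpr hp
  have hg := summable_one_add_mul_abs_int_rpow_neg (a := 2 * π / L) (by positivity) hs
  exact (summable_prod_apply (ι := Fin ν) (fun n => by positivity) hg).of_nonneg_of_le
    (fun z => by positivity)
    (one_add_norm_latticePt_rpow_neg_le_prod hν hL ((Nat.cast_nonneg' ν).trans hp.le))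

theorem tsum_one_add_norm_latticePt_rpow_neg_le {ν : ℕ} (hν : 0 < ν) {L p : ℝ} (hL : 1 ≤ L)
    (hp : ν < p) :
    ∑' z : Fin ν → ℤ, (1 + ‖latticePt ν L z‖) ^ (-p)
      ≤ (1 + (π * (p / ν - 1))⁻¹) ^ ν * L ^ ν := by
  have hL0 : 0 < L := by linarith
  have hp0 : 0 ≤ p := (Nat.cast_nonneg' ν).trans hp.le
  have hs : 1 < p / ν := (one_lt_div (by positivity)).mpr hp
  have ha : 0 < 2 * π / L := by positivity
  have hg := summable_one_add_mul_abs_int_rpow_neg ha hs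
  have hg0 : 0 ≤ fun n : ℤ => (1 + 2 * π / L * |(n : ℝ)|) ^ (-(p / ν)) :=
    fun n => by positivity
  have hone_dim : ∑' n : ℤ, (1 + 2 * π / L * |(n : ℝ)|) ^ (-(p / ν))
      ≤ (1 + (π * (p / ν - 1))⁻¹) * L := by
    have hπs : 0 < π * (p / ν - 1) := mul_pos pi_pos (by linarith)
    calc _ ≤ 1 + 2 * (2 * π / L * (p / ν - 1))⁻¹ := tsum_one_add_mul_abs_int_rpow_neg_le ha hs
      _ = 1 + (π * (p / ν - 1))⁻¹ * L := by field_simp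
      _ ≤ (1 + (π * (p / ν - 1))⁻¹) * L := by
          rw [add_mul, one_mul]; gcongr
  have hprod := summable_prod_apply (ι := Fin ν) hg0 hg
  calc ∑' z : Fin ν → ℤ, (1 + ‖latticePt ν L z‖) ^ (-p)
        ≤ ∑' z : Fin ν → ℤ, ∏ i, (1 + 2 * π / L * |(z i : ℝ)|) ^ (-(p / ν)) :=
        (summable_one_add_norm_latticePt_rpow_neg hν hL0 hp).tsum_le_tsum
          (one_add_norm_latticePt_rpow_neg_le_prod hν hL0 hp0) hprod
    _ ≤ (∑' n : ℤ, (1 + 2 * π / L * |(n : ℝ)|) ^ (-(p / ν))) ^ ν := by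
        simpa using tsum_prod_apply_le_tsum_pow (ι := Fin ν) hg0 hg
    _ ≤ ((1 + (π * (p / ν - 1))⁻¹) * L) ^ ν := by gcongr
    _ = (1 + (π * (p / ν - 1))⁻¹) ^ ν * L ^ ν := mul_pow _ _ _

theorem summable_and_tsum_latticePt_le {ν : ℕ} (hν : 0 < ν) {L p A : ℝ} (hL : 1 ≤ L)
    (hp : ν < p) {f : Kspace ν → ℝ} (hf₀ : ∀ k, 0 ≤ f k)
    (hf : ∀ k, f k ≤ A * (1 + ‖k‖) ^ (-p)) :
    (Summable fun z : Fin ν → ℤ => f (latticePt ν L z)) ∧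
      ∑' z : Fin ν → ℤ, f (latticePt ν L z) ≤ A * (1 + (π * (p / ν - 1))⁻¹) ^ ν * L ^ ν := by
  have hA : 0 ≤ A := by simpa using (hf₀ 0).trans (hf 0)
  obtain ⟨hs, ht⟩ := summable_and_tsum_le_of_le_mul (fun z => hf₀ (latticePt ν L z))
    (fun z => hf (latticePt ν L z)) (summable_one_add_norm_latticePt_rpow_neg hν (by linarith) hp)
  refine ⟨hs, ht.trans ?_⟩
  rw [mul_assoc]
  exact mul_le_mul_of_nonneg_left (tsum_one_add_norm_latticePt_rpow_neg_le hν hL hp) hA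

theorem norm_le_two_rpow_mul_one_add_norm_rpow_neg {ν : ℕ} {lam : Kspace ν → ℂ} {c e q : ℝ}
    (he : 0 ≤ e) (hq : q ≤ e) (hdec : ∀ k : Kspace ν, ‖lam k‖ ≤ c / (1 + ‖k‖ ^ e))
    (k : Kspace ν) : ‖lam k‖ ≤ 2 ^ e * c * (1 + ‖k‖) ^ (-q) := by
  have hc : 0 ≤ c := by
    have h0 := (le_div_iff₀ (by positivity)).mp ((norm_nonneg _).trans (hdec 0))
    rwa [zero_mul] at h0
  calc ‖lam k‖ ≤ 2 ^ e * c * (1 + ‖k‖) ^ (-e) :=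
        le_two_rpow_mul_one_add_rpow_neg (norm_nonneg k) he hc (hdec k)
    _ ≤ 2 ^ e * c * (1 + ‖k‖) ^ (-q) := by
        gcongr
        exact le_add_of_nonneg_right (norm_nonneg k)

theorem eps_mul_norm_sq_le_two_rpow_mul_one_add_norm_rpow_neg {ν : ℕ} {m : ℝ} (hm : 0 < m)
    {lam : Kspace ν → ℂ} {c e q : ℝ} (he : 0 ≤ e) (hq : q + 2 ≤ 2 * e)
    (hdec : ∀ k : Kspace ν, ‖lam k‖ ≤ c / (1 + ‖k‖ ^ e)) (k : Kspace ν) :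
    eps ν m k * ‖lam k‖ ^ 2 ≤ (2 ^ e * c) ^ 2 / (2 * m) * (1 + ‖k‖) ^ (-q) := by
  have hk := sq_mul_sq_le_of_le_mul_one_add_rpow_neg (norm_nonneg k) (norm_nonneg _)
    (norm_le_two_rpow_mul_one_add_norm_rpow_neg he le_rfl hdec k)
  calc eps ν m k * ‖lam k‖ ^ 2 = ‖k‖ ^ 2 * ‖lam k‖ ^ 2 / (2 * m) := by rw [eps]; ring
    _ ≤ (2 ^ e * c) ^ 2 * (1 + ‖k‖) ^ (2 - 2 * e) / (2 * m) := by gcongr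
    _ ≤ (2 ^ e * c) ^ 2 * (1 + ‖k‖) ^ (-q) / (2 * m) := by
        gcongr
        · exact le_add_of_nonneg_right (norm_nonneg k)
        · linarith
    _ = (2 ^ e * c) ^ 2 / (2 * m) * (1 + ‖k‖) ^ (-q) := by ring

theorem statement0_general
    (ν : ℕ) (hν : 1 ≤ ν) (m : ℝ) (hm : 0 < m)
    (lam : Kspace ν → ℂ)
    (c δ : ℝ) (hδ : 0 < δ)
    (hdec : ∀ k : Kspace ν, ‖lam k‖ ≤ c / (1 + ‖k‖ ^ (max (ν : ℝ) ((ν : ℝ) / 2 + 1) + δ))) :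
    ∃ M : ℝ, ∀ L : ℝ, 1 ≤ L →
      (Summable fun z : Fin ν → ℤ => ‖lam (latticePt ν L z)‖) ∧
      (∑' z : Fin ν → ℤ, ‖lam (latticePt ν L z)‖) ≤ M * L ^ ν ∧
      (Summable fun z : Fin ν → ℤ =>
        eps ν m (latticePt ν L z) * ‖lam (latticePt ν L z)‖ ^ 2) ∧
      (∑' z : Fin ν → ℤ, eps ν m (latticePt ν L z) * ‖lam (latticePt ν L z)‖ ^ 2)
          ≤ M * L ^ ν ∧
      (∀ k : Kspace ν, eps ν m k * ‖lam k‖ ^ 2 ≤ M) := by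
  set e := max (ν : ℝ) ((ν : ℝ) / 2 + 1) + δ
  set p := (ν : ℝ) + δ
  have hp : (ν : ℝ) < p := by linarith
  obtain ⟨hpe, hpe₂⟩ : p ≤ e ∧ p + 2 ≤ 2 * e := by
    constructor <;> linarith [le_max_left (ν : ℝ) (ν / 2 + 1), le_max_right (ν : ℝ) (ν / 2 + 1)]
  have he : 0 ≤ e := by positivity
  set A := 2 ^ e * c
  set B := A ^ 2 / (2 * m)
  set C := (1 + (π * (p / ν - 1))⁻¹) ^ ν
  have hdecay : ∀ k : Kspace ν, ‖lam k‖ ≤ A * (1 + ‖k‖) ^ (-p) :=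
    norm_le_two_rpow_mul_one_add_norm_rpow_neg he hpe hdec
  have henergy : ∀ k : Kspace ν, eps ν m k * ‖lam k‖ ^ 2 ≤ B * (1 + ‖k‖) ^ (-p) :=
    eps_mul_norm_sq_le_two_rpow_mul_one_add_norm_rpow_neg hm he hpe₂ hdec
  refine ⟨max (max (A * C) (B * C)) B, fun L hL => ?_⟩
  obtain ⟨hs₁, ht₁⟩ := summable_and_tsum_latticePt_le hν hL hp (fun _ => norm_nonneg _) hdecay
  obtain ⟨hs₂, ht₂⟩ := summable_and_tsum_latticePt_le hν hL hp
    (fun _ => mul_nonneg (by unfold eps; positivity) (sq_nonneg _)) henergy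
  refine ⟨hs₁, ht₁.trans ?_, hs₂, ht₂.trans ?_, fun k => (henergy k).trans ?_⟩
  · gcongr
    exact (le_max_left _ _).trans (le_max_left _ _)
  · gcongr
    exact (le_max_right _ _).trans (le_max_left _ _)
  · refine (mul_le_of_le_one_right (by positivity) ?_).trans (le_max_right _ _)
    exact rpow_le_one_of_one_le_of_nonpos (le_add_of_nonneg_right (norm_nonneg k)) (by linarith)

theorem statement0
    (ν : ℕ) (hν : 1 ≤ ν) (m : ℝ) (hm : 0 < m)
    (lam : Kspace ν → ℂ) (hmeas : Measurable lam)
    (hlam1 : ∀ k, ‖lam k‖ ≤ 1)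
    (c δ : ℝ) (hδ : 0 < δ)
    (hdec : ∀ k : Kspace ν, ‖lam k‖ ≤ c / (1 + ‖k‖ ^ (max (ν : ℝ) ((ν : ℝ) / 2 + 1) + δ))) :
    ∃ M : ℝ, ∀ L : ℝ, 1 ≤ L →
      (Summable fun z : Fin ν → ℤ => ‖lam (latticePt ν L z)‖) ∧
      (∑' z : Fin ν → ℤ, ‖lam (latticePt ν L z)‖) ≤ M * L ^ ν ∧
      (Summable fun z : Fin ν → ℤ =>
        eps ν m (latticePt ν L z) * ‖lam (latticePt ν L z)‖ ^ 2) ∧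
      (∑' z : Fin ν → ℤ, eps ν m (latticePt ν L z) * ‖lam (latticePt ν L z)‖ ^ 2)
          ≤ M * L ^ ν ∧
      (∀ k : Kspace ν, eps ν m k * ‖lam k‖ ^ 2 ≤ M) :=
  statement0_general ν hν m hm lam c δ hδ hdec
end PB
end
end

section
/- If q, ρ ≥ 0 and σ(q,ρ) > 0, then f(k,ρ) > |u| q |λ(k)| for every k ∈ ℝ^ν (so E(k,q,ρ) is well defined and strictly positive for every k), and the function k ↦ −β^{−1} ln(1 − e^{−β E(k,q,ρ)}) − (E(k,q,ρ) − f(k,ρ))/2 is Lebesgue integrable on ℝ^ν; in particular p²(q,ρ) is finite. -/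
/-!
Write `f = ε + σ + |u| q` with `ε ≥ 0`. Since `|λ| ≤ 1`, the radicand of `E` is at least
`f² - (|u| q)² ≥ σ f`, so `E ≥ σ > 0` and `E ≥ √(σ / 2m) ‖k‖`. Hence the Bose term
`-β⁻¹ log (1 - e^{-βE}) ≤ e^{-βE} / (β (1 - e^{-βσ}))` decays exponentially, while
`f - E = u² q² |λ|² / (f + E) ≤ u² q² |λ| / σ` inherits the decay of `λ`, which is integrable
because its decay exponent exceeds the dimension `ν`.
-/

open MeasureTheory Real Filter Topology

noncomputable section

open Module

theorem Real.neg_log_one_sub_le_div {x : ℝ} (hx : x < 1) : -log (1 - x) ≤ x / (1 - x) := by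
  have h := one_sub_inv_le_log_of_pos (sub_pos.mpr hx)
  have hx0 : 1 - x ≠ 0 := (sub_pos.mpr hx).ne'
  have hx' : x / (1 - x) = (1 - x)⁻¹ - 1 := by field_simp; ring
  linarith

theorem Real.one_add_rpow_le {t p : ℝ} (ht : 0 ≤ t) (hp : 0 ≤ p) :
    (1 + t) ^ p ≤ 2 ^ p * (1 + t ^ p) := by
  have htp : 0 ≤ t ^ p := rpow_nonneg ht p
  have h2p : 0 ≤ (2 : ℝ) ^ p := rpow_nonneg zero_le_two p
  rcases le_total t 1 with h | h
  · calc (1 + t) ^ p ≤ 2 ^ p := rpow_le_rpow (by linarith) (by linarith) hp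
      _ ≤ 2 ^ p * (1 + t ^ p) := le_mul_of_one_le_right h2p (by linarith)
  · calc (1 + t) ^ p ≤ (2 * t) ^ p := rpow_le_rpow (by linarith) (by linarith) hp
      _ = 2 ^ p * t ^ p := mul_rpow zero_le_two ht
      _ ≤ 2 ^ p * (1 + t ^ p) := by gcongr; linarith

theorem Real.exp_neg_mul_le_rpow_one_add {a t : ℝ} (ha : 0 < a) (ht : 0 ≤ t) (n : ℕ) :
    exp (-(a * t)) ≤ n.factorial * exp a / a ^ n * (1 + t) ^ (-(n : ℝ)) := by
  have hat : 0 < a * (1 + t) := by positivity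
  calc exp (-(a * t)) = exp a / exp (a * (1 + t)) := by rw [← exp_sub]; ring_nf
    _ ≤ exp a / ((a * (1 + t)) ^ n / n.factorial) := by
      gcongr; exact pow_div_factorial_le_exp _ hat.le n
    _ = n.factorial * exp a / a ^ n * (1 + t) ^ (-(n : ℝ)) := by
      rw [rpow_neg (by positivity), rpow_natCast, mul_pow]; field_simp

section Integrability

variable {E F : Type*} [NormedAddCommGroup E] [NormedSpace ℝ E] [FiniteDimensional ℝ E]
  [MeasurableSpace E] [BorelSpace E] {μ : Measure E} [μ.IsAddHaarMeasure] [NormedAddCommGroup F]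

theorem integrable_exp_neg_mul_norm {a : ℝ} (ha : 0 < a) :
    Integrable (fun x : E ↦ exp (-(a * ‖x‖))) μ := by
  set n := finrank ℝ E + 1
  have hr : (finrank ℝ E : ℝ) < n := by simp [n]
  refine ((integrable_one_add_norm hr).const_mul (n.factorial * exp a / a ^ n)).mono'
    (by fun_prop) (.of_forall fun x ↦ ?_)
  rw [norm_of_nonneg (exp_pos _).le]
  exact exp_neg_mul_le_rpow_one_add ha (norm_nonneg x) _

theorem integrable_of_norm_le_div_one_add_norm_rpow {g : E → F} (hg : AEStronglyMeasurable g μ)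
    {c r : ℝ} (hr : (finrank ℝ E : ℝ) < r) (hgc : ∀ x, ‖g x‖ ≤ c / (1 + ‖x‖ ^ r)) :
    Integrable g μ := by
  have hr0 : 0 ≤ r := (Nat.cast_nonneg _).trans hr.le
  refine ((integrable_one_add_norm hr).const_mul (c * 2 ^ r)).mono' hg
    (.of_forall fun x ↦ (hgc x).trans ?_)
  have hc : 0 ≤ c := by
    have h := (norm_nonneg _).trans (hgc x)
    rwa [le_div_iff₀ (by positivity), zero_mul] at h
  calc c / (1 + ‖x‖ ^ r) = c * (2 ^ r / (2 ^ r * (1 + ‖x‖ ^ r))) := by field_simp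
    _ ≤ c * (2 ^ r / (1 + ‖x‖) ^ r) := by gcongr; exact one_add_rpow_le (norm_nonneg x) hr0
    _ = c * 2 ^ r * (1 + ‖x‖) ^ (-r) := by rw [rpow_neg (by positivity)]; ring

theorem integrable_log_one_sub_exp_neg {g : E → ℝ} (hg : Measurable g) {s a : ℝ} (hs : 0 < s)
    (ha : 0 < a) (hgs : ∀ x, s ≤ g x) (hga : ∀ x, a * ‖x‖ ≤ g x) :
    Integrable (fun x ↦ log (1 - exp (-g x))) μ := by
  have hd : 0 < 1 - exp (-s) := sub_pos.mpr (exp_lt_one_iff.mpr (neg_lt_zero.mpr hs))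
  refine ((integrable_exp_neg_mul_norm ha).const_mul (1 - exp (-s))⁻¹).mono'
    (hg.neg.exp.const_sub 1).log.aestronglyMeasurable (.of_forall fun x ↦ ?_)
  have hexp_s : exp (-g x) ≤ exp (-s) := exp_le_exp.mpr (neg_le_neg (hgs x))
  have hexp_a : exp (-g x) ≤ exp (-(a * ‖x‖)) := exp_le_exp.mpr (neg_le_neg (hga x))
  have hlt : exp (-g x) < 1 := hexp_s.trans_lt (by linarith)
  rw [norm_eq_abs, abs_of_nonpos (log_nonpos (by linarith) (by linarith [exp_pos (-g x)]))]
  calc -log (1 - exp (-g x)) ≤ exp (-g x) / (1 - exp (-g x)) := neg_log_one_sub_le_div hlt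
    _ ≤ exp (-(a * ‖x‖)) / (1 - exp (-s)) := by gcongr
    _ = (1 - exp (-s))⁻¹ * exp (-(a * ‖x‖)) := by ring

end Integrability

namespace PB

variable {ν : ℕ} {m μ v u : ℝ} {lam : Kspace ν → ℂ} {q ρ : ℝ}

theorem eps_nonneg (hm : 0 ≤ m) (k : Kspace ν) : 0 ≤ eps ν m k := by
  unfold eps; positivity

theorem fF_eq_eps_add_sigma0 (k : Kspace ν) :
    fF ν m μ v k ρ = eps ν m k + sigma0 μ v u q ρ + |u| * q := by
  unfold fF sigma0; ring

theorem sigma0_le_fF (hm : 0 ≤ m) (hq : 0 ≤ q) (k : Kspace ν) :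
    sigma0 μ v u q ρ ≤ fF ν m μ v k ρ := by
  rw [fF_eq_eps_add_sigma0 (u := u) (q := q)]
  linarith [eps_nonneg hm k, mul_nonneg (abs_nonneg u) hq]

theorem abs_mul_mul_norm_lt_fF (hm : 0 ≤ m) (hq : 0 ≤ q) (hσ : 0 < sigma0 μ v u q ρ)
    {k : Kspace ν} (hlam : ‖lam k‖ ≤ 1) : |u| * q * ‖lam k‖ < fF ν m μ v k ρ := by
  rw [fF_eq_eps_add_sigma0 (u := u) (q := q)]
  linarith [eps_nonneg hm k, mul_le_of_le_one_right (mul_nonneg (abs_nonneg u) hq) hlam]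

theorem sigma0_mul_fF_le (hm : 0 ≤ m) (hq : 0 ≤ q) (hσ : 0 < sigma0 μ v u q ρ)
    {k : Kspace ν} (hlam : ‖lam k‖ ≤ 1) :
    sigma0 μ v u q ρ * fF ν m μ v k ρ ≤ fF ν m μ v k ρ ^ 2 - u ^ 2 * q ^ 2 * ‖lam k‖ ^ 2 := by
  have hw : 0 ≤ |u| * q := mul_nonneg (abs_nonneg u) hq
  have hcoupling : u ^ 2 * q ^ 2 * ‖lam k‖ ^ 2 ≤ (|u| * q) ^ 2 := by
    rw [mul_pow, sq_abs, ← mul_pow]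
    exact mul_le_of_le_one_right (by positivity) (pow_le_one₀ (norm_nonneg _) hlam)
  rw [fF_eq_eps_add_sigma0 (u := u) (q := q)] at *
  nlinarith [eps_nonneg hm k]

theorem sigma0_le_eE (hm : 0 ≤ m) (hq : 0 ≤ q) (hσ : 0 < sigma0 μ v u q ρ)
    {k : Kspace ν} (hlam : ‖lam k‖ ≤ 1) : sigma0 μ v u q ρ ≤ eE ν m μ v u lam k q ρ := by
  refine Real.le_sqrt_of_sq_le ((?_ : _ ≤ _).trans (sigma0_mul_fF_le hm hq hσ hlam))
  rw [sq]
  exact mul_le_mul_of_nonneg_left (sigma0_le_fF hm hq k) hσ.le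

theorem eE_pos (hm : 0 ≤ m) (hq : 0 ≤ q) (hσ : 0 < sigma0 μ v u q ρ)
    {k : Kspace ν} (hlam : ‖lam k‖ ≤ 1) : 0 < eE ν m μ v u lam k q ρ :=
  hσ.trans_le (sigma0_le_eE hm hq hσ hlam)

theorem sqrt_mul_norm_le_eE (hm : 0 ≤ m) (hq : 0 ≤ q) (hσ : 0 < sigma0 μ v u q ρ)
    {k : Kspace ν} (hlam : ‖lam k‖ ≤ 1) :
    √(sigma0 μ v u q ρ / (2 * m)) * ‖k‖ ≤ eE ν m μ v u lam k q ρ := by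
  refine Real.le_sqrt_of_sq_le ((?_ : _ ≤ _).trans (sigma0_mul_fF_le hm hq hσ hlam))
  have heps : eps ν m k ≤ fF ν m μ v k ρ := by
    rw [fF_eq_eps_add_sigma0 (u := u) (q := q)]; linarith [mul_nonneg (abs_nonneg u) hq]
  calc (√(sigma0 μ v u q ρ / (2 * m)) * ‖k‖) ^ 2 = sigma0 μ v u q ρ * eps ν m k := by
        rw [mul_pow, Real.sq_sqrt (by positivity), eps]; ring
    _ ≤ sigma0 μ v u q ρ * fF ν m μ v k ρ := mul_le_mul_of_nonneg_left heps hσ.le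

theorem eE_sq (hm : 0 ≤ m) (hq : 0 ≤ q) (hσ : 0 < sigma0 μ v u q ρ)
    {k : Kspace ν} (hlam : ‖lam k‖ ≤ 1) :
    eE ν m μ v u lam k q ρ ^ 2 = fF ν m μ v k ρ ^ 2 - u ^ 2 * q ^ 2 * ‖lam k‖ ^ 2 :=
  Real.sq_sqrt <| (mul_pos hσ (hσ.trans_le (sigma0_le_fF hm hq k))).le.trans
    (sigma0_mul_fF_le hm hq hσ hlam)

theorem eE_le_fF (hm : 0 ≤ m) (hq : 0 ≤ q) (hσ : 0 < sigma0 μ v u q ρ) (k : Kspace ν) :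
    eE ν m μ v u lam k q ρ ≤ fF ν m μ v k ρ :=
  (Real.sqrt_le_left (hσ.le.trans (sigma0_le_fF hm hq k))).mpr
    (sub_le_self _ (by positivity))

theorem fF_sub_eE_mul_sigma0_le (hm : 0 ≤ m) (hq : 0 ≤ q) (hσ : 0 < sigma0 μ v u q ρ)
    {k : Kspace ν} (hlam : ‖lam k‖ ≤ 1) :
    (fF ν m μ v k ρ - eE ν m μ v u lam k q ρ) * sigma0 μ v u q ρ ≤
      u ^ 2 * q ^ 2 * ‖lam k‖ ^ 2 := by
  have hfE := sub_nonneg.mpr (eE_le_fF (lam := lam) hm hq hσ k)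
  have hσfE : sigma0 μ v u q ρ ≤ fF ν m μ v k ρ + eE ν m μ v u lam k q ρ := by
    linarith [sigma0_le_fF (μ := μ) (v := v) (u := u) (ρ := ρ) hm hq k, eE_pos hm hq hσ hlam]
  nlinarith [eE_sq hm hq hσ hlam, mul_le_mul_of_nonneg_left hσfE hfE]

theorem continuous_fF : Continuous fun k : Kspace ν ↦ fF ν m μ v k ρ := by
  unfold fF eps; fun_prop

theorem measurable_eE (hmeas : Measurable lam) :
    Measurable fun k : Kspace ν ↦ eE ν m μ v u lam k q ρ := by
  unfold eE
  exact ((continuous_fF.measurable.pow_const 2).sub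
    ((hmeas.norm.pow_const 2).const_mul _)).sqrt

theorem integrable_log_one_sub_exp_neg_eE {β : ℝ} (hm : 0 < m) (hβ : 0 < β) (hq : 0 ≤ q)
    (hσ : 0 < sigma0 μ v u q ρ) (hmeas : Measurable lam) (hlam : ∀ k, ‖lam k‖ ≤ 1) :
    Integrable fun k : Kspace ν ↦ log (1 - exp (-β * eE ν m μ v u lam k q ρ)) := by
  simp_rw [neg_mul]
  refine integrable_log_one_sub_exp_neg ((measurable_eE hmeas).const_mul β) (mul_pos hβ hσ)
    (a := β * √(sigma0 μ v u q ρ / (2 * m))) (by positivity)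
    (fun k ↦ mul_le_mul_of_nonneg_left (sigma0_le_eE hm.le hq hσ (hlam k)) hβ.le)
    (fun k ↦ ?_)
  rw [mul_assoc]
  exact mul_le_mul_of_nonneg_left (sqrt_mul_norm_le_eE hm.le hq hσ (hlam k)) hβ.le

theorem integrable_eE_sub_fF (hm : 0 ≤ m) (hq : 0 ≤ q) (hσ : 0 < sigma0 μ v u q ρ)
    (hmeas : Measurable lam) (hint : Integrable lam) (hlam : ∀ k, ‖lam k‖ ≤ 1) :
    Integrable fun k : Kspace ν ↦ (eE ν m μ v u lam k q ρ - fF ν m μ v k ρ) / 2 := by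
  refine (hint.norm.const_mul (u ^ 2 * q ^ 2 / (2 * sigma0 μ v u q ρ))).mono'
    (((measurable_eE hmeas).sub continuous_fF.measurable).div_const 2).aestronglyMeasurable
    (.of_forall fun k ↦ ?_)
  have hfE := sub_nonneg.mpr (eE_le_fF (lam := lam) hm hq hσ k)
  have hlam2 : ‖lam k‖ ^ 2 ≤ ‖lam k‖ := pow_le_of_le_one (norm_nonneg _) (hlam k) two_ne_zero
  rw [norm_div, ← norm_neg, neg_sub, norm_of_nonneg hfE, Real.norm_two]
  calc (fF ν m μ v k ρ - eE ν m μ v u lam k q ρ) / 2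
      ≤ u ^ 2 * q ^ 2 * ‖lam k‖ ^ 2 / (2 * sigma0 μ v u q ρ) := by
        rw [div_le_div_iff₀ two_pos (by positivity)]
        nlinarith [fF_sub_eE_mul_sigma0_le hm hq hσ (hlam k)]
    _ ≤ u ^ 2 * q ^ 2 * ‖lam k‖ / (2 * sigma0 μ v u q ρ) := by gcongr
    _ = _ := by ring

theorem statement2_general
    (ν : ℕ) (m β μ u v : ℝ) (hm : 0 < m) (hβ : 0 < β)
    (lam : Kspace ν → ℂ) (hmeas : Measurable lam)
    (hlam1 : ∀ k, ‖lam k‖ ≤ 1)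
    (c δ : ℝ) (hδ : 0 < δ)
    (hdec : ∀ k : Kspace ν, ‖lam k‖ ≤ c / (1 + ‖k‖ ^ (max (ν : ℝ) ((ν : ℝ) / 2 + 1) + δ)))
    (q ρ : ℝ) (hq : 0 ≤ q) (hσ : 0 < sigma0 μ v u q ρ) :
    (∀ k : Kspace ν, |u| * q * ‖lam k‖ < fF ν m μ v k ρ) ∧
    (∀ k : Kspace ν, 0 < eE ν m μ v u lam k q ρ) ∧
    Integrable (fun k : Kspace ν =>
      -β⁻¹ * Real.log (1 - Real.exp (-β * eE ν m μ v u lam k q ρ))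
        - (eE ν m μ v u lam k q ρ - fF ν m μ v k ρ) / 2) := by
  have hdim : (finrank ℝ (Kspace ν) : ℝ) < max (ν : ℝ) ((ν : ℝ) / 2 + 1) + δ := by
    rw [finrank_euclideanSpace_fin]
    linarith [le_max_left (ν : ℝ) ((ν : ℝ) / 2 + 1)]
  have hint : Integrable lam :=
    integrable_of_norm_le_div_one_add_norm_rpow hmeas.aestronglyMeasurable hdim hdec
  refine ⟨fun k ↦ abs_mul_mul_norm_lt_fF hm.le hq hσ (hlam1 k),
    fun k ↦ eE_pos hm.le hq hσ (hlam1 k), ?_⟩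
  exact ((integrable_log_one_sub_exp_neg_eE hm hβ hq hσ hmeas hlam1).const_mul (-β⁻¹)).sub
    (integrable_eE_sub_fF hm.le hq hσ hmeas hint hlam1)

theorem statement2
    (ν : ℕ) (hν : 1 ≤ ν) (m β μ u v : ℝ) (hm : 0 < m) (hβ : 0 < β)
    (hv : 0 < v) (hvu : 0 < v - u)
    (lam : Kspace ν → ℂ) (hmeas : Measurable lam) (hlam0 : lam 0 = 1)
    (hlam1 : ∀ k, ‖lam k‖ ≤ 1)
    (c δ : ℝ) (hδ : 0 < δ)
    (hdec : ∀ k : Kspace ν, ‖lam k‖ ≤ c / (1 + ‖k‖ ^ (max (ν : ℝ) ((ν : ℝ) / 2 + 1) + δ)))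
    (q ρ : ℝ) (hq : 0 ≤ q) (hρ : 0 ≤ ρ) (hσ : 0 < sigma0 μ v u q ρ) :
    (∀ k : Kspace ν, |u| * q * ‖lam k‖ < fF ν m μ v k ρ) ∧
    (∀ k : Kspace ν, 0 < eE ν m μ v u lam k q ρ) ∧
    Integrable (fun k : Kspace ν =>
      -β⁻¹ * Real.log (1 - Real.exp (-β * eE ν m μ v u lam k q ρ))
        - (eE ν m μ v u lam k q ρ - fF ν m μ v k ρ) / 2) :=
  statement2_general ν m β μ u v hm hβ lam hmeas hlam1 c δ hδ hdec q ρ hq hσ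

end PB
end
end
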